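/- arXiv:2512.23296 — 6 statements merged into one kernel-verified Lean document; each statement's English description precedes it below -/
import Mathlib

section
/- For the square initial packing with α₀ = 0 and swelling factor 1 < ξ < 2/√3 the breathing coefficient has the closed form u_bs(ξ) = (4ξ − 4)/(π(ξ² − 1)) = 4/(π(ξ + 1)); this function is strictly decreasing on (1, 2/√3), and u_bs(ξ) tends to 2/π as ξ → 1⁺. -/
open Real Set Filter

lemma four_mul_sub_four_div_eq {ξ : ℝ} (hξ : ξ ≠ 1) :
    (4 * ξ - 4) / (π * (ξ ^ 2 - 1)) = 4 / (π * (ξ + 1)) := by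
  have hξ' : ξ - 1 ≠ 0 := sub_ne_zero.mpr hξ
  calc (4 * ξ - 4) / (π * (ξ ^ 2 - 1)) = (ξ - 1) * 4 / ((ξ - 1) * (π * (ξ + 1))) := by
        congr 1 <;> ring
    _ = 4 / (π * (ξ + 1)) := mul_div_mul_left _ _ hξ'

lemma strictAntiOn_four_div_pi_mul_add_one :
    StrictAntiOn (fun ξ : ℝ => 4 / (π * (ξ + 1))) (Ioi (-1)) := by
  intro a ha b _ hab
  have ha' : 0 < a + 1 := by simp only [mem_Ioi] at ha; linarith
  exact div_lt_div_of_pos_left four_pos (by positivity)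
    (mul_lt_mul_of_pos_left (by linarith) pi_pos)

lemma tendsto_four_div_pi_mul_add_one :
    Tendsto (fun ξ : ℝ => 4 / (π * (ξ + 1))) (nhds 1) (nhds (2 / π)) := by
  have hcont : ContinuousAt (fun ξ : ℝ => 4 / (π * (ξ + 1))) 1 :=
    continuousAt_const.div (continuousAt_const.mul (continuousAt_id.add continuousAt_const))
      (by positivity)
  convert hcont.tendsto using 2
  field_simp
  norm_num

/-- For the square initial packing with `α₀ = 0` and swelling factor
`1 < ξ < 2/√3`, the breathing coefficient has the closed form
`u_bs(ξ) = (4ξ − 4)/(π(ξ² − 1)) = 4/(π(ξ + 1))`; it is strictly decreasing on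
this interval and tends to `2/π` as `ξ → 1⁺`. -/
theorem square_packing_breathing_coefficient_initial_branch :
    (∀ ξ ∈ Ioo (1 : ℝ) (2 / Real.sqrt 3),
        (4 * ξ - 4) / (π * (ξ ^ 2 - 1)) = 4 / (π * (ξ + 1))) ∧
    StrictAntiOn (fun ξ : ℝ => (4 * ξ - 4) / (π * (ξ ^ 2 - 1)))
      (Ioo (1 : ℝ) (2 / Real.sqrt 3)) ∧
    Tendsto (fun ξ : ℝ => (4 * ξ - 4) / (π * (ξ ^ 2 - 1)))
      (nhdsWithin 1 (Ioi 1)) (nhds (2 / π)) := by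
  have closed_form : ∀ ξ ∈ Ioi (1 : ℝ),
      (4 * ξ - 4) / (π * (ξ ^ 2 - 1)) = 4 / (π * (ξ + 1)) :=
    fun ξ hξ => four_mul_sub_four_div_eq (ne_of_gt hξ)
  refine ⟨fun ξ hξ => closed_form ξ hξ.1, ?_, ?_⟩
  · refine (strictAntiOn_four_div_pi_mul_add_one.mono fun ξ hξ => ?_).congr
      fun ξ hξ => (closed_form ξ hξ.1).symm
    exact lt_trans (by norm_num) hξ.1
  · exact (tendsto_four_div_pi_mul_add_one.mono_left nhdsWithin_le_nhds).congr'
      (eventually_nhdsWithin_of_forall fun ξ hξ => (closed_form ξ hξ).symm)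
end

section
/- For the square initial packing with α₀ = 0 and swelling factor 1 < ξ < 2/√3, the void area strictly decreases: ΔÃ_void = (4ξ − 4) − π(ξ² − 1) < 0. Equivalently, u_bs(ξ) < 1 on this branch, so the swelling of the discs is partially absorbed by disappearance of void (regime between internal transfer and solid breathing). -/
/-!
Both claims reduce to the factorisation `(4ξ − 4) − π(ξ² − 1) = (ξ − 1)(4 − π(ξ + 1))`:
for `ξ > 1` the first factor is positive and the second negative, since `π(ξ + 1) > 2π > 4`.
-/

open Real Set

lemma four_lt_pi_mul_add_one {ξ : ℝ} (hξ : 1 < ξ) : 4 < π * (ξ + 1) := by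
  nlinarith [pi_gt_three]

lemma void_area_change_eq (ξ : ℝ) :
    (4 * ξ - 4) - π * (ξ ^ 2 - 1) = (ξ - 1) * (4 - π * (ξ + 1)) := by
  ring

lemma void_area_change_neg {ξ : ℝ} (hξ : 1 < ξ) : (4 * ξ - 4) - π * (ξ ^ 2 - 1) < 0 := by
  rw [void_area_change_eq]
  exact mul_neg_of_pos_of_neg (sub_pos.mpr hξ) (sub_neg.mpr (four_lt_pi_mul_add_one hξ))

lemma solid_area_change_pos {ξ : ℝ} (hξ : 1 < ξ) : 0 < π * (ξ ^ 2 - 1) :=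
  mul_pos pi_pos (by nlinarith)

/-- For the square initial packing with `α₀ = 0` and `1 < ξ < 2/√3`, the void
area strictly decreases: `ΔÃ_void = (4ξ − 4) − π(ξ² − 1) < 0`; equivalently
`u_bs(ξ) < 1`, so the disc swelling is partially absorbed by the void. -/
theorem square_packing_void_disappearance
    (ξ : ℝ) (hξ : ξ ∈ Ioo (1 : ℝ) (2 / Real.sqrt 3)) :
    (4 * ξ - 4) - π * (ξ ^ 2 - 1) < 0 ∧
    (4 * ξ - 4) / (π * (ξ ^ 2 - 1)) < 1 := by
  have hvoid := void_area_change_neg hξ.1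
  refine ⟨hvoid, ?_⟩
  rw [div_lt_one (solid_area_change_pos hξ.1)]
  linarith
end

section
/- Fix n ∈ ℕ and set a = 2ⁿ. Define u on [2a/√3, 4a/√3] by u(ξ) = (f(ξ) − 2√3)/(π(ξ² − 1)), where f(ξ) = 8a·√(ξ² − a²) for ξ ∈ [2a/√3, 2a] and f(ξ) = ξ²·(√3 + 2·sin(2π/3 − 2·arccos(2a/ξ))) for ξ ∈ [2a, 4a/√3]. Then u has a strict local minimum at ξ = 2a = 2^{n+1}: there is δ > 0 such that u(ξ) > u(2^{n+1}) for all ξ in the domain with 0 < |ξ − 2^{n+1}| < δ. (Local minimisation of the breathing coefficient at each 60-hexagonal configuration.) -/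
/-!
Since `f (2a) = 8a · a√3 = 2√3 (2a)²`, the breathing coefficient at `ξ = 2a` equals `2√3/π`, and
for `ξ > 1` the inequality `u ξ > 2√3/π` is equivalent to `f ξ > 2√3 ξ²`. On the first branch this
reads `(3ξ² - 4a²)(4a² - ξ²) > 0`; on the second it reads `sin (2π/3 - 2θ) > √3/2` with
`θ = arccos (2a/ξ) ∈ (0, π/6)`. Both hold strictly inside `(2a/√3, 4a/√3)` away from `2a`, and
`δ = 4a/√3 - 2a` keeps `ξ` inside that open interval.
-/

open Real Set

lemma sqrt_three_lt_two : √3 < 2 := by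
  rw [sqrt_lt' two_pos]; norm_num

lemma div_pi_mul_sq_sub_one_eq (c : ℝ) {x : ℝ} (hx : 1 < x ^ 2) :
    (c * x ^ 2 - c) / (π * (x ^ 2 - 1)) = c / π := by
  have : x ^ 2 - 1 ≠ 0 := by linarith
  field_simp

lemma div_pi_lt_div_pi_mul_sq_sub_one_iff {c x A : ℝ} (hx : 1 < x ^ 2) :
    c / π < (A - c) / (π * (x ^ 2 - 1)) ↔ c * x ^ 2 < A := by
  rw [div_lt_div_iff₀ pi_pos (mul_pos pi_pos (by linarith))]
  constructor <;> intro h <;> nlinarith [pi_pos]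

lemma sqrt_three_div_two_lt_sin {x : ℝ} (hx : x ∈ Ioo (π / 3) (2 * π / 3)) :
    √3 / 2 < sin x := by
  have hpi := pi_pos
  rw [← sin_pi_div_three]
  rcases le_or_gt x (π / 2) with hx' | hx'
  · exact sin_lt_sin_of_lt_of_le_pi_div_two (by linarith) hx' hx.1
  · rw [← sin_pi_sub x]
    exact sin_lt_sin_of_lt_of_le_pi_div_two (by linarith) (by linarith) (by linarith [hx.2])

lemma two_sqrt_three_mul_sq_lt_of_mem_Ioo_left {a ξ : ℝ} (ha : 0 < a)
    (hξ : ξ ∈ Ioo (2 * a / √3) (2 * a)) :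
    2 * √3 * ξ ^ 2 < 8 * a * √(ξ ^ 2 - a ^ 2) := by
  have hs3 : (0 : ℝ) < √3 := by positivity
  have hξ0 : 0 < ξ := lt_trans (by positivity) hξ.1
  have hlow : 4 * a ^ 2 < 3 * ξ ^ 2 := by
    have h := pow_lt_pow_left₀ ((div_lt_iff₀ hs3).1 hξ.1) (by positivity) two_ne_zero
    rw [mul_pow, mul_pow, sq_sqrt zero_le_three] at h
    linarith
  have hup : ξ ^ 2 < 4 * a ^ 2 := by nlinarith [hξ.2]
  refine lt_of_pow_lt_pow_left₀ 2 (by positivity) ?_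
  calc (2 * √3 * ξ ^ 2) ^ 2 = 12 * ξ ^ 4 := by
        rw [mul_pow, mul_pow, sq_sqrt zero_le_three]; ring
    _ < 64 * a ^ 2 * (ξ ^ 2 - a ^ 2) := by
        nlinarith [mul_pos (sub_pos.2 hlow) (sub_pos.2 hup)]
    _ = (8 * a * √(ξ ^ 2 - a ^ 2)) ^ 2 := by
        rw [mul_pow, sq_sqrt (by nlinarith)]; ring

lemma arccos_mem_Ioo_of_mem_Ioo {c : ℝ} (hc : c ∈ Ioo (√3 / 2) 1) :
    arccos c ∈ Ioo 0 (π / 6) := by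
  have hs3 : (0 : ℝ) < √3 := by positivity
  refine ⟨arccos_pos.2 hc.2, ?_⟩
  calc arccos c < arccos (√3 / 2) := arccos_lt_arccos (by linarith) hc.1 hc.2.le
    _ = π / 6 := by
        rw [← cos_pi_div_six, arccos_cos (by positivity) (by linarith [pi_pos])]

lemma two_sqrt_three_mul_sq_lt_of_mem_Ioo_right {a ξ : ℝ} (hξ : ξ ∈ Ioo (2 * a) (4 * a / √3)) :
    2 * √3 * ξ ^ 2 < ξ ^ 2 * (√3 + 2 * sin (2 * π / 3 - 2 * arccos (2 * a / ξ))) := by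
  have hs3 : (0 : ℝ) < √3 := by positivity
  have ha : 0 < a := by
    have := hξ.1.trans hξ.2
    rw [lt_div_iff₀ hs3] at this
    nlinarith [sqrt_three_lt_two]
  have hξ0 : 0 < ξ := by linarith [hξ.1]
  have hc : 2 * a / ξ ∈ Ioo (√3 / 2) 1 := by
    refine ⟨?_, (div_lt_one hξ0).2 hξ.1⟩
    rw [lt_div_iff₀ hξ0]
    have := (lt_div_iff₀ hs3).1 hξ.2
    linarith
  obtain ⟨hθ0, hθ⟩ := arccos_mem_Ioo_of_mem_Ioo hc
  have hsin := sqrt_three_div_two_lt_sin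
    (x := 2 * π / 3 - 2 * arccos (2 * a / ξ)) ⟨by linarith, by linarith⟩
  nlinarith [pow_pos hξ0 2]

lemma sqrt_two_mul_sq_sub_sq {a : ℝ} (ha : 0 ≤ a) : √((2 * a) ^ 2 - a ^ 2) = a * √3 := by
  rw [show (2 * a) ^ 2 - a ^ 2 = a ^ 2 * 3 by ring, sqrt_mul (sq_nonneg a), sqrt_sq ha]

lemma two_mul_lt_four_mul_div_sqrt_three {a : ℝ} (ha : 0 < a) : 2 * a < 4 * a / √3 := by
  rw [lt_div_iff₀ (by positivity)]
  nlinarith [sqrt_three_lt_two]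

lemma mem_Ioo_of_abs_sub_two_mul_lt {a ξ : ℝ} (ha : 0 < a)
    (h : |ξ - 2 * a| < 4 * a / √3 - 2 * a) : ξ ∈ Ioo (2 * a / √3) (4 * a / √3) := by
  have hs3 : (0 : ℝ) < √3 := by positivity
  have h' := abs_lt.1 h
  have : 2 * a / √3 < 4 * a - 4 * a / √3 := by
    rw [lt_sub_iff_add_lt, ← add_div, div_lt_iff₀ hs3]
    nlinarith [sq_sqrt (zero_le_three : (0 : ℝ) ≤ 3)]
  constructor <;> linarith

/-- Local minimisation of the breathing coefficient at each 60-hexagonal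
configuration `ξ = 2^(n+1)`: with `a = 2ⁿ`, the breathing coefficient `u`,
built from the two body-area branches around `ξ = 2a`, has a strict local
minimum at `ξ = 2a` within the domain `[2a/√3, 4a/√3]`. -/
theorem breathing_coefficient_strict_local_min_at_60hexagonal
    (n : ℕ) (a : ℝ) (ha : a = 2 ^ n)
    (f : ℝ → ℝ)
    (hf₁ : ∀ ξ ∈ Icc (2 * a / Real.sqrt 3) (2 * a),
      f ξ = 8 * a * Real.sqrt (ξ ^ 2 - a ^ 2))
    (hf₂ : ∀ ξ ∈ Icc (2 * a) (4 * a / Real.sqrt 3),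
      f ξ = ξ ^ 2 * (Real.sqrt 3 +
        2 * Real.sin (2 * π / 3 - 2 * Real.arccos (2 * a / ξ))))
    (u : ℝ → ℝ)
    (hu : ∀ ξ ∈ Icc (2 * a / Real.sqrt 3) (4 * a / Real.sqrt 3),
      u ξ = (f ξ - 2 * Real.sqrt 3) / (π * (ξ ^ 2 - 1))) :
    ∃ δ > 0, ∀ ξ ∈ Icc (2 * a / Real.sqrt 3) (4 * a / Real.sqrt 3),
      0 < |ξ - 2 * a| → |ξ - 2 * a| < δ → u ξ > u (2 * a) := by
  have ha1 : 1 ≤ a := ha ▸ one_le_pow₀ one_le_two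
  have h2a : 2 * a ∈ Icc (2 * a / √3) (4 * a / √3) :=
    ⟨div_le_self (by positivity) (one_le_sqrt.2 (by norm_num)),
      (two_mul_lt_four_mul_div_sqrt_three (by positivity)).le⟩
  have hu2a : u (2 * a) = 2 * √3 / π := by
    rw [hu _ h2a, hf₁ _ ⟨h2a.1, le_rfl⟩, sqrt_two_mul_sq_sub_sq (by positivity),
      ← div_pi_mul_sq_sub_one_eq (2 * √3) (by nlinarith : 1 < (2 * a) ^ 2)]
    ring
  refine ⟨4 * a / √3 - 2 * a, sub_pos.2 (two_mul_lt_four_mul_div_sqrt_three (by positivity)),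
    fun ξ hξ hne hδ ↦ ?_⟩
  obtain ⟨hlow, hup⟩ := mem_Ioo_of_abs_sub_two_mul_lt (by positivity) hδ
  have hξ1 : 1 < ξ ^ 2 := by
    have : 1 < 2 * a / √3 := by
      rw [lt_div_iff₀ (by positivity)]; linarith [sqrt_three_lt_two]
    nlinarith
  rw [hu _ hξ, hu2a, gt_iff_lt, div_pi_lt_div_pi_mul_sq_sub_one_iff hξ1]
  rcases lt_or_gt_of_ne (sub_ne_zero.1 (abs_pos.1 hne)) with hlt | hgt
  · rw [hf₁ _ ⟨hξ.1, hlt.le⟩]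
    exact two_sqrt_three_mul_sq_lt_of_mem_Ioo_left (by positivity) ⟨hlow, hlt⟩
  · rw [hf₂ _ ⟨hgt.le, hξ.2⟩]
    exact two_sqrt_three_mul_sq_lt_of_mem_Ioo_right ⟨hgt, hup⟩
end

section
/- Fix an integer n ≥ 1 and set a = 2ⁿ. Define u on [a, 2a] by u(ξ) = (f(ξ) − 2√3)/(π(ξ² − 1)), where f(ξ) = ξ²·(√3 + 2·sin(2π/3 − 2·arccos(a/ξ))) for ξ ∈ [a, 2a/√3] and f(ξ) = 8a·√(ξ² − a²) for ξ ∈ [2a/√3, 2a]. Then u has a strict local minimum at ξ = 2a/√3 = 2^{n+1}·√3/3: there is δ > 0 such that u(ξ) > u(2a/√3) for all ξ ∈ [a, 2a] with 0 < |ξ − 2a/√3| < δ. (Local minimisation of the breathing coefficient at each 30-hexagonal configuration.) -/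
/-!
Write `c = 2a/√3` and `α = arccos (a/ξ)`. Since `f(c) = 2√3 c²`, the breathing coefficient at `c`
is exactly `2√3/π`, and `u ξ > u c` is equivalent to `f ξ > 2√3 ξ²`. On the left branch this reads
`sin (2π/3 - 2α) > √3/2`, true because `α ∈ (0, π/6)` puts the angle in `(π/3, 2π/3)`; on the right
branch, after squaring, it reads `(3ξ² - 4a²)(4a² - ξ²) > 0`. Both inequalities become equalities
at the endpoints `ξ = a` and `ξ = 2a`, which is why `δ` cannot exceed `min (c - a) (2a - c)`.
-/

open Real Set

lemma sqrt_three_div_two_lt_sin_s14 {φ : ℝ} (h₁ : π / 3 < φ) (h₂ : φ < 2 * π / 3) :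
    √3 / 2 < sin φ := by
  have hdist : |φ - π / 2| < π / 6 := abs_lt.2 ⟨by linarith, by linarith⟩
  rw [← cos_sub_pi_div_two, ← cos_abs, ← cos_pi_div_six]
  exact cos_lt_cos_of_nonneg_of_le_pi (abs_nonneg _) (by linarith [pi_pos]) hdist

lemma arccos_lt_pi_div_six {x : ℝ} (hx : √3 / 2 < x) (hx₁ : x ≤ 1) : arccos x < π / 6 := by
  have h := arccos_lt_arccos (by linarith [sqrt_nonneg 3]) hx hx₁
  rwa [← cos_pi_div_six, arccos_cos (by positivity) (by linarith [pi_pos])] at h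

lemma two_sqrt_three_mul_sq_lt_mul_sqrt_three_add_two_sin {a ξ : ℝ} (ha : 0 < a) (h₁ : a < ξ)
    (h₂ : ξ < 2 * a / √3) :
    2 * √3 * ξ ^ 2 < ξ ^ 2 * (√3 + 2 * sin (2 * π / 3 - 2 * arccos (a / ξ))) := by
  have hξ : 0 < ξ := ha.trans h₁
  have hx₁ : a / ξ < 1 := (div_lt_one hξ).2 h₁
  have hx : √3 / 2 < a / ξ := by
    rw [div_lt_div_iff₀ two_pos hξ]
    linarith [(lt_div_iff₀ (by positivity : (0 : ℝ) < √3)).1 h₂]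
  have hα₀ : 0 < arccos (a / ξ) := arccos_pos.2 hx₁
  have hα₁ : arccos (a / ξ) < π / 6 := arccos_lt_pi_div_six hx hx₁.le
  have hsin := sqrt_three_div_two_lt_sin_s14 (φ := 2 * π / 3 - 2 * arccos (a / ξ))
    (by linarith) (by linarith)
  rw [mul_comm (2 * √3)]
  exact mul_lt_mul_of_pos_left (by linarith) (by positivity)

lemma two_sqrt_three_mul_sq_lt_eight_mul_sqrt {a ξ : ℝ} (ha : 0 < a) (h₁ : 2 * a / √3 < ξ)
    (h₂ : ξ < 2 * a) :
    2 * √3 * ξ ^ 2 < 8 * a * √(ξ ^ 2 - a ^ 2) := by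
  have hs : √3 ^ 2 = 3 := sq_sqrt (by norm_num)
  have hξ : 2 * a < √3 * ξ := by
    rw [div_lt_iff₀ (by positivity)] at h₁
    linarith
  have hξ₀ : 0 < ξ := by nlinarith [sqrt_nonneg 3]
  have hξ₁ : 4 * a ^ 2 < 3 * ξ ^ 2 := by nlinarith
  have hξ₂ : ξ ^ 2 < 4 * a ^ 2 := by nlinarith
  refine lt_of_pow_lt_pow_left₀ 2 (by positivity) ?_
  rw [mul_pow, mul_pow, mul_pow, hs, sq_sqrt (by nlinarith)]
  nlinarith [mul_pos (sub_pos.2 hξ₁) (sub_pos.2 hξ₂)]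

lemma eight_mul_sqrt_eq_two_sqrt_three_mul_sq {a c : ℝ} (ha : 0 ≤ a) (hc : 3 * c ^ 2 = 4 * a ^ 2) :
    8 * a * √(c ^ 2 - a ^ 2) = 2 * √3 * c ^ 2 := by
  have hs : √3 ^ 2 = 3 := sq_sqrt (by norm_num)
  have h : c ^ 2 - a ^ 2 = (a / √3) ^ 2 := by rw [div_pow, hs]; linarith
  rw [h, sqrt_sq (by positivity)]
  field_simp
  rw [hs]
  linear_combination -2 * hc

lemma two_sqrt_three_mul_sq_sub_div_eq {ξ : ℝ} (hξ : ξ ^ 2 ≠ 1) :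
    (2 * √3 * ξ ^ 2 - 2 * √3) / (π * (ξ ^ 2 - 1)) = 2 * √3 / π := by
  have : ξ ^ 2 - 1 ≠ 0 := sub_ne_zero.2 hξ
  field_simp

lemma two_sqrt_three_div_pi_lt_sub_div_iff {A ξ : ℝ} (hξ : 1 < ξ ^ 2) :
    2 * √3 / π < (A - 2 * √3) / (π * (ξ ^ 2 - 1)) ↔ 2 * √3 * ξ ^ 2 < A := by
  rw [div_lt_div_iff₀ pi_pos (mul_pos pi_pos (sub_pos.2 hξ)), mul_comm π, ← mul_assoc,
    mul_lt_mul_iff_of_pos_right pi_pos]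
  constructor <;> intro h <;> linarith

theorem breathing_coefficient_strict_local_min_at_30hexagonal_general
    (n : ℕ) (a : ℝ) (ha : a = 2 ^ n)
    (f : ℝ → ℝ)
    (hf₁ : ∀ ξ ∈ Icc a (2 * a / Real.sqrt 3),
      f ξ = ξ ^ 2 * (Real.sqrt 3 +
        2 * Real.sin (2 * π / 3 - 2 * Real.arccos (a / ξ))))
    (hf₂ : ∀ ξ ∈ Icc (2 * a / Real.sqrt 3) (2 * a),
      f ξ = 8 * a * Real.sqrt (ξ ^ 2 - a ^ 2))
    (u : ℝ → ℝ)
    (hu : ∀ ξ ∈ Icc a (2 * a),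
      u ξ = (f ξ - 2 * Real.sqrt 3) / (π * (ξ ^ 2 - 1))) :
    ∃ δ > 0, ∀ ξ ∈ Icc a (2 * a),
      0 < |ξ - 2 * a / Real.sqrt 3| → |ξ - 2 * a / Real.sqrt 3| < δ →
        u ξ > u (2 * a / Real.sqrt 3) := by
  have ha₁ : 1 ≤ a := ha ▸ one_le_pow₀ one_le_two
  have hs : √3 ^ 2 = 3 := sq_sqrt (by norm_num)
  set c := 2 * a / √3 with hc_def
  have hc : 3 * c ^ 2 = 4 * a ^ 2 := by rw [hc_def, div_pow, hs]; ring
  have hs₁ : 1 < √3 := by rw [lt_sqrt zero_le_one]; norm_num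
  have hs₂ : √3 < 2 := (sqrt_lt' two_pos).2 (by norm_num)
  have hac : a < c := by rw [lt_div_iff₀ (by positivity)]; nlinarith
  have hc2a : c < 2 * a := by rw [div_lt_iff₀ (by positivity)]; nlinarith
  have huc : u c = 2 * √3 / π := by
    rw [hu c ⟨hac.le, hc2a.le⟩, hf₂ c ⟨le_rfl, hc2a.le⟩,
      eight_mul_sqrt_eq_two_sqrt_three_mul_sq (by positivity) hc,
      two_sqrt_three_mul_sq_sub_div_eq (by nlinarith)]
  refine ⟨min (c - a) (2 * a - c), lt_min (by linarith) (by linarith), fun ξ hξ hne hδ => ?_⟩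
  obtain ⟨hξ₁, hξ₂⟩ := abs_lt.1 hδ
  have haξ : a < ξ := by linarith [min_le_left (c - a) (2 * a - c)]
  have hξa : ξ < 2 * a := by linarith [min_le_right (c - a) (2 * a - c)]
  rw [huc, hu ξ hξ, gt_iff_lt, two_sqrt_three_div_pi_lt_sub_div_iff (by nlinarith)]
  rcases lt_or_gt_of_ne (sub_ne_zero.1 (abs_pos.1 hne)) with hξc | hξc
  · rw [hf₁ ξ ⟨hξ.1, hξc.le⟩]
    exact two_sqrt_three_mul_sq_lt_mul_sqrt_three_add_two_sin (by positivity) haξ hξc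
  · rw [hf₂ ξ ⟨hξc.le, hξ.2⟩]
    exact two_sqrt_three_mul_sq_lt_eight_mul_sqrt (by positivity) hξc hξa

/-- Local minimisation of the breathing coefficient at each 30-hexagonal
configuration `ξ = 2a/√3 = 2^(n+1)·√3/3`: with `n ≥ 1` and `a = 2ⁿ`, the
breathing coefficient `u`, built from the two body-area branches on `[a, 2a]`,
has a strict local minimum at `ξ = 2a/√3`. -/
theorem breathing_coefficient_strict_local_min_at_30hexagonal
    (n : ℕ) (hn : 1 ≤ n) (a : ℝ) (ha : a = 2 ^ n)
    (f : ℝ → ℝ)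
    (hf₁ : ∀ ξ ∈ Icc a (2 * a / Real.sqrt 3),
      f ξ = ξ ^ 2 * (Real.sqrt 3 +
        2 * Real.sin (2 * π / 3 - 2 * Real.arccos (a / ξ))))
    (hf₂ : ∀ ξ ∈ Icc (2 * a / Real.sqrt 3) (2 * a),
      f ξ = 8 * a * Real.sqrt (ξ ^ 2 - a ^ 2))
    (u : ℝ → ℝ)
    (hu : ∀ ξ ∈ Icc a (2 * a),
      u ξ = (f ξ - 2 * Real.sqrt 3) / (π * (ξ ^ 2 - 1))) :
    ∃ δ > 0, ∀ ξ ∈ Icc a (2 * a),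
      0 < |ξ - 2 * a / Real.sqrt 3| → |ξ - 2 * a / Real.sqrt 3| < δ →
        u ξ > u (2 * a / Real.sqrt 3) :=
  breathing_coefficient_strict_local_min_at_30hexagonal_general n a ha f hf₁ hf₂ u hu
end

section
/- Define F : [1, ∞) → ℝ as follows: for ξ ≥ 1 let n be the unique natural number with 2ⁿ ≤ ξ < 2^{n+1}, and set F(ξ) = ξ²·(√3 + 2·sin(2π/3 − 2·arccos(2ⁿ/ξ))) if 2ⁿ ≤ ξ < 2^{n+1}/√3 and F(ξ) = 8·2ⁿ·√(ξ² − 4ⁿ) if 2^{n+1}/√3 ≤ ξ < 2^{n+1}. Then F is continuous on [1, ∞). (The nondimensionalised body area of the 60-hexagonal initial packing with α₀ = 0 is a continuous function of the swelling factor throughout all packing transitions.) -/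
/-!
On each dyadic interval `[2ⁿ, 2ⁿ⁺¹]` the body area is given by two closed-form branches, both
continuous away from `ξ = 0`. They agree where the packing angle reaches `π/6`, at
`ξ = 2ⁿ⁺¹/√3` (both equal `8·4ⁿ/√3`), and at the transition `ξ = 2ⁿ⁺¹`, where the angle drops
back to `0`, the large-angle branch of step `n` meets the small-angle branch of step `n + 1`
(both equal `8√3·4ⁿ`). So `F` is continuous on every closed dyadic interval, and these
intervals chain together to cover `[1, ∞)`.
-/

open Real Set Filter Topology

section PiecewiseContinuity

variable {α β : Type*} [LinearOrder α] [TopologicalSpace α] [OrderTopology α] [TopologicalSpace β]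
  {f : α → β} {t : ℕ → α}

theorem continuousOn_Icc_of_forall_Icc_succ (ht : Monotone t)
    (hf : ∀ k, ContinuousOn f (Icc (t k) (t (k + 1)))) (m : ℕ) :
    ContinuousOn f (Icc (t 0) (t m)) := by
  induction m with
  | zero => simp [continuousOn_singleton]
  | succ m ih =>
    rw [← Icc_union_Icc_eq_Icc (ht m.zero_le) (ht m.le_succ)]
    exact ih.union_of_isClosed (hf m) isClosed_Icc isClosed_Icc

theorem continuousOn_Ici_of_forall_Icc_succ (ht : Monotone t) (ht_unbdd : ∀ x, ∃ m, x < t m)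
    (hf : ∀ k, ContinuousOn f (Icc (t k) (t (k + 1)))) :
    ContinuousOn f (Ici (t 0)) := by
  intro x hx
  obtain ⟨m, hxm⟩ := ht_unbdd x
  have hmem : Icc (t 0) (t m) ∈ 𝓝[Ici (t 0)] x :=
    mem_of_superset (inter_mem_nhdsWithin _ (Iio_mem_nhds hxm))
      fun y hy => ⟨hy.1, hy.2.le⟩
  exact ((continuousOn_Icc_of_forall_Icc_succ ht hf m).continuousWithinAt
    ⟨hx, hxm.le⟩).mono_of_mem_nhdsWithin hmem

end PiecewiseContinuity

-- The body area after `n` transitions on the branches `α ∈ [0, π/6)` and `α ∈ [π/6, π/3)`.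
noncomputable def areaSmallAngle (n : ℕ) (ξ : ℝ) : ℝ :=
  ξ ^ 2 * (√3 + 2 * sin (2 * π / 3 - 2 * arccos (2 ^ n / ξ)))

noncomputable def areaLargeAngle (n : ℕ) (ξ : ℝ) : ℝ :=
  8 * 2 ^ n * √(ξ ^ 2 - 4 ^ n)

/-- The swelling factor at which the packing angle `α = arccos (2ⁿ / ξ)` reaches `π/6`. -/
noncomputable def crossover (n : ℕ) : ℝ := 2 ^ (n + 1) / √3

theorem continuousOn_areaSmallAngle (n : ℕ) : ContinuousOn (areaSmallAngle n) {0}ᶜ := by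
  have harccos : ContinuousOn (fun ξ : ℝ => arccos (2 ^ n / ξ)) {0}ᶜ :=
    continuous_arccos.comp_continuousOn (continuousOn_const.div continuousOn_id fun _ h => h)
  unfold areaSmallAngle
  fun_prop

theorem continuous_areaLargeAngle (n : ℕ) : Continuous (areaLargeAngle n) := by
  unfold areaLargeAngle
  fun_prop

theorem two_pow_lt_crossover (n : ℕ) : (2 : ℝ) ^ n < crossover n := by
  rw [crossover, lt_div_iff₀ (by positivity), pow_succ]
  have : √3 < 2 := by rw [sqrt_lt' two_pos]; norm_num
  gcongr

theorem crossover_lt_two_pow_succ (n : ℕ) : crossover n < 2 ^ (n + 1) :=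
  div_lt_self (by positivity) (by rw [lt_sqrt zero_le_one]; norm_num)

theorem areaSmallAngle_crossover (n : ℕ) :
    areaSmallAngle n (crossover n) = areaLargeAngle n (crossover n) := by
  have h3 : √3 ^ 2 = 3 := sq_sqrt (by norm_num)
  have hcos : 2 ^ n / crossover n = cos (π / 6) := by
    rw [cos_pi_div_six, crossover, pow_succ]
    field_simp
  have hsq : crossover n ^ 2 - 4 ^ n = (2 ^ n / √3) ^ 2 := by
    rw [crossover, div_pow, div_pow, h3, show (4 : ℝ) = 2 * 2 by norm_num, mul_pow, pow_succ]
    ring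
  rw [areaSmallAngle, areaLargeAngle, hcos, arccos_cos (by positivity) (by linarith [pi_pos]),
    show 2 * π / 3 - 2 * (π / 6) = π / 3 by ring, sin_pi_div_three, hsq,
    sqrt_sq (by positivity), crossover]
  field_simp
  ring

theorem areaLargeAngle_two_pow_succ (n : ℕ) :
    areaLargeAngle n (2 ^ (n + 1)) = areaSmallAngle (n + 1) (2 ^ (n + 1)) := by
  have h3 : √3 ^ 2 = 3 := sq_sqrt (by norm_num)
  have hsq : ((2 : ℝ) ^ (n + 1)) ^ 2 - 4 ^ n = (√3 * 2 ^ n) ^ 2 := by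
    rw [mul_pow, h3, show (4 : ℝ) = 2 * 2 by norm_num, mul_pow, pow_succ]
    ring
  rw [areaLargeAngle, areaSmallAngle, div_self (by positivity), arccos_one,
    show 2 * π / 3 - 2 * 0 = π - π / 3 by ring, sin_pi_sub, sin_pi_div_three, hsq,
    sqrt_sq (by positivity), pow_succ]
  ring

theorem continuousOn_Icc_two_pow_two_pow_succ {F : ℝ → ℝ} (n : ℕ)
    (hsmall : EqOn F (areaSmallAngle n) (Ico (2 ^ n) (crossover n)))
    (hlarge : EqOn F (areaLargeAngle n) (Ico (crossover n) (2 ^ (n + 1))))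
    (hnext : F (2 ^ (n + 1)) = areaSmallAngle (n + 1) (2 ^ (n + 1))) :
    ContinuousOn F (Icc (2 ^ n) (2 ^ (n + 1))) := by
  have h_two_pow_lt := two_pow_lt_crossover n
  have h_lt_two_pow_succ := crossover_lt_two_pow_succ n
  have hF_crossover : F (crossover n) = areaSmallAngle n (crossover n) := by
    rw [hlarge ⟨le_rfl, h_lt_two_pow_succ⟩, areaSmallAngle_crossover]
  have hF_two_pow_succ : F (2 ^ (n + 1)) = areaLargeAngle n (2 ^ (n + 1)) := by
    rw [hnext, areaLargeAngle_two_pow_succ]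
  have hcont_small : ContinuousOn F (Icc (2 ^ n) (crossover n)) := by
    refine ((continuousOn_areaSmallAngle n).mono fun ξ hξ => ?_).congr ?_
    · exact ((pow_pos two_pos n).trans_le hξ.1).ne'
    · rw [← Ico_insert_right h_two_pow_lt.le]
      exact forall_mem_insert.2 ⟨hF_crossover, hsmall⟩
  have hcont_large : ContinuousOn F (Icc (crossover n) (2 ^ (n + 1))) := by
    refine (continuous_areaLargeAngle n).continuousOn.congr ?_
    rw [← Ico_insert_right h_lt_two_pow_succ.le]
    exact forall_mem_insert.2 ⟨hF_two_pow_succ, hlarge⟩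
  rw [← Icc_union_Icc_eq_Icc h_two_pow_lt.le h_lt_two_pow_succ.le]
  exact hcont_small.union_of_isClosed hcont_large isClosed_Icc isClosed_Icc

/-- The nondimensionalised body area of the 60-hexagonal initial packing with
`α₀ = 0` is a continuous function of the swelling factor throughout all
packing transitions: the piecewise function `F` is continuous on `[1, ∞)`. -/
theorem body_area_continuous
    (F : ℝ → ℝ)
    (hF₁ : ∀ ξ : ℝ, ∀ n : ℕ, 2 ^ n ≤ ξ → ξ < 2 ^ (n + 1) / Real.sqrt 3 →
      F ξ = ξ ^ 2 * (Real.sqrt 3 +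
        2 * Real.sin (2 * π / 3 - 2 * Real.arccos (2 ^ n / ξ))))
    (hF₂ : ∀ ξ : ℝ, ∀ n : ℕ, 2 ^ (n + 1) / Real.sqrt 3 ≤ ξ → ξ < 2 ^ (n + 1) →
      F ξ = 8 * 2 ^ n * Real.sqrt (ξ ^ 2 - 4 ^ n)) :
    ContinuousOn F (Ici (1 : ℝ)) := by
  have hpieces (n : ℕ) : ContinuousOn F (Icc (2 ^ n) (2 ^ (n + 1))) :=
    continuousOn_Icc_two_pow_two_pow_succ n (fun ξ hξ => hF₁ ξ n hξ.1 hξ.2)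
      (fun ξ hξ => hF₂ ξ n hξ.1 hξ.2)
      (hF₁ _ (n + 1) le_rfl (two_pow_lt_crossover (n + 1)))
  simpa using continuousOn_Ici_of_forall_Icc_succ (pow_right_mono₀ one_le_two)
    (pow_unbounded_of_one_lt · one_lt_two) hpieces
end

section
/- Let F : [1, ∞) → ℝ be the body-area function of the 60-hexagonal initial packing with α₀ = 0 (for ξ ≥ 1 and n the unique natural number with 2ⁿ ≤ ξ < 2^{n+1}, F(ξ) = ξ²·(√3 + 2·sin(2π/3 − 2·arccos(2ⁿ/ξ))) if ξ < 2^{n+1}/√3 and F(ξ) = 8·2ⁿ·√(ξ² − 4ⁿ) otherwise). Then for every ξ > 1 the breathing coefficient satisfies the global lower bound (F(ξ) − 2√3)/(π(ξ² − 1)) ≥ √12/π, with equality if and only if ξ is a hexagonal configuration, i.e. ξ = 2ⁿ for some integer n ≥ 1 or ξ = 2^{n+1}/√3 for some natural number n. -/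
/-!
Let `a = 2ⁿ` be the dyadic scale of `ξ` and `w = √(ξ² - a²)`. The excess of the body area over
its hexagonal value `2√3 ξ²` factors as `2w(a - √3w)` on the curved piece `ξ < 2a/√3` and as
`2(√3a - w)(√3w - a)` on the flat piece. On each piece both factors are nonnegative, and the
excess vanishes only at `w = 0`, i.e. `ξ = a`, resp. at `√3w = a`, i.e. `ξ = 2a/√3`. Finally, the
breathing coefficient exceeds `√12/π` by exactly this excess divided by `π(ξ² - 1)`.
-/

open Real Set

lemma Real.sqrt_twelve : √12 = 2 * √3 := by
  rw [show (12 : ℝ) = 2 ^ 2 * 3 by norm_num, sqrt_mul (by positivity), sqrt_sq zero_le_two]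

lemma Real.sin_two_pi_div_three_sub_two_mul_arccos {t : ℝ} (ht₀ : -1 ≤ t) (ht₁ : t ≤ 1) :
    sin (2 * π / 3 - 2 * arccos t) = √3 / 2 * (2 * t ^ 2 - 1) + t * √(1 - t ^ 2) := by
  rw [sin_sub, sin_two_mul, cos_two_mul, cos_arccos ht₀ ht₁, sin_arccos,
    show 2 * π / 3 = π - π / 3 by ring, sin_pi_sub, cos_pi_sub, sin_pi_div_three,
    cos_pi_div_three]
  ring

noncomputable def hexagonalBodyArea (ξ : ℝ) : ℝ :=
  2 * √3 * ξ ^ 2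

noncomputable def curvedBodyArea (a ξ : ℝ) : ℝ :=
  ξ ^ 2 * (√3 + 2 * sin (2 * π / 3 - 2 * arccos (a / ξ)))

noncomputable def flatBodyArea (a ξ : ℝ) : ℝ :=
  8 * a * √(ξ ^ 2 - a ^ 2)

section BodyArea

variable {a ξ : ℝ}

lemma lt_two_mul_div_sqrt_three (ha : 0 < a) : a < 2 * a / √3 := by
  rw [lt_div_iff₀ (by positivity)]
  nlinarith [sqrt_lt' two_pos |>.mpr (by norm_num : (3 : ℝ) < 2 ^ 2)]

lemma two_mul_div_sqrt_three_lt (ha : 0 < a) : 2 * a / √3 < 2 * a :=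
  div_lt_self (by positivity) (lt_sqrt zero_le_one |>.mpr (by norm_num))

lemma le_sqrt_three_mul_sqrt_sq_sub_sq_iff (ha : 0 ≤ a) (haξ : a ≤ ξ) :
    a ≤ √3 * √(ξ ^ 2 - a ^ 2) ↔ 2 * a / √3 ≤ ξ := by
  rw [← pow_le_pow_iff_left₀ ha (by positivity) two_ne_zero,
    ← pow_le_pow_iff_left₀ (by positivity) (ha.trans haξ) two_ne_zero, mul_pow, div_pow,
    sq_sqrt zero_le_three, sq_sqrt (by nlinarith)]
  constructor <;> intro <;> linarith

lemma sqrt_three_mul_sqrt_sq_sub_sq_le_iff (ha : 0 ≤ a) (haξ : a ≤ ξ) :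
    √3 * √(ξ ^ 2 - a ^ 2) ≤ a ↔ ξ ≤ 2 * a / √3 := by
  rw [← pow_le_pow_iff_left₀ (by positivity) ha two_ne_zero,
    ← pow_le_pow_iff_left₀ (ha.trans haξ) (by positivity) two_ne_zero, mul_pow, div_pow,
    sq_sqrt zero_le_three, sq_sqrt (by nlinarith)]
  constructor <;> intro <;> linarith

lemma curvedBodyArea_sub_hexagonalBodyArea (ha : 0 < a) (haξ : a ≤ ξ) :
    curvedBodyArea a ξ - hexagonalBodyArea ξ =
      2 * √(ξ ^ 2 - a ^ 2) * (a - √3 * √(ξ ^ 2 - a ^ 2)) := by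
  have hξ : 0 < ξ := ha.trans_le haξ
  have hw : √(ξ ^ 2 - a ^ 2) ^ 2 = ξ ^ 2 - a ^ 2 := sq_sqrt (by nlinarith)
  have hu : √(1 - (a / ξ) ^ 2) = √(ξ ^ 2 - a ^ 2) / ξ := by
    have hsq : 1 - (a / ξ) ^ 2 = (√(ξ ^ 2 - a ^ 2) / ξ) ^ 2 := by
      rw [div_pow (√_), hw]
      field_simp
    rw [hsq, sqrt_sq (by positivity)]
  have ht : a / ξ ≤ 1 := (div_le_one hξ).mpr haξ
  rw [curvedBodyArea, hexagonalBodyArea,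
    sin_two_pi_div_three_sub_two_mul_arccos (by linarith [div_pos ha hξ]) ht, hu]
  field_simp
  linear_combination 2 * √3 * hw

lemma flatBodyArea_sub_hexagonalBodyArea (h : a ^ 2 ≤ ξ ^ 2) :
    flatBodyArea a ξ - hexagonalBodyArea ξ =
      2 * (√3 * a - √(ξ ^ 2 - a ^ 2)) * (√3 * √(ξ ^ 2 - a ^ 2) - a) := by
  have hw : √(ξ ^ 2 - a ^ 2) ^ 2 = ξ ^ 2 - a ^ 2 := sq_sqrt (by linarith)
  have h3 : √3 ^ 2 = 3 := sq_sqrt zero_le_three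
  rw [flatBodyArea, hexagonalBodyArea]
  linear_combination 2 * √3 * hw - 2 * a * √(ξ ^ 2 - a ^ 2) * h3

lemma sqrt_sq_sub_sq_lt_sqrt_three_mul (ha : 0 < a) (hξ : 0 ≤ ξ) (hξa : ξ < 2 * a) :
    √(ξ ^ 2 - a ^ 2) < √3 * a := by
  rw [sqrt_lt' (by positivity), mul_pow, sq_sqrt zero_le_three]
  nlinarith

lemma hexagonalBodyArea_le_curvedBodyArea (ha : 0 < a) (haξ : a ≤ ξ) (hξ : ξ < 2 * a / √3) :
    hexagonalBodyArea ξ ≤ curvedBodyArea a ξ := by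
  have hlt := (lt_iff_lt_of_le_iff_le (le_sqrt_three_mul_sqrt_sq_sub_sq_iff ha.le haξ)).mpr hξ
  rw [← sub_nonneg, curvedBodyArea_sub_hexagonalBodyArea ha haξ]
  exact mul_nonneg (by positivity) (sub_nonneg.mpr hlt.le)

lemma curvedBodyArea_eq_hexagonalBodyArea_iff (ha : 0 < a) (haξ : a ≤ ξ)
    (hξ : ξ < 2 * a / √3) : curvedBodyArea a ξ = hexagonalBodyArea ξ ↔ ξ = a := by
  have hlt := (lt_iff_lt_of_le_iff_le (le_sqrt_three_mul_sqrt_sq_sub_sq_iff ha.le haξ)).mpr hξ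
  rw [← sub_eq_zero, curvedBodyArea_sub_hexagonalBodyArea ha haξ, mul_eq_zero,
    or_iff_left (sub_ne_zero.mpr hlt.ne'), mul_eq_zero, or_iff_right two_ne_zero,
    sqrt_eq_zero', sub_nonpos, pow_le_pow_iff_left₀ (ha.le.trans haξ) ha.le two_ne_zero]
  exact ⟨fun h ↦ le_antisymm h haξ, le_of_eq⟩

lemma hexagonalBodyArea_le_flatBodyArea (ha : 0 < a) (hξ : 2 * a / √3 ≤ ξ)
    (hξa : ξ < 2 * a) :
    hexagonalBodyArea ξ ≤ flatBodyArea a ξ := by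
  have haξ : a ≤ ξ := (lt_two_mul_div_sqrt_three ha).le.trans hξ
  have hlt := sqrt_sq_sub_sq_lt_sqrt_three_mul ha (ha.le.trans haξ) hξa
  have hle := (le_sqrt_three_mul_sqrt_sq_sub_sq_iff ha.le haξ).mpr hξ
  rw [← sub_nonneg, flatBodyArea_sub_hexagonalBodyArea (by gcongr)]
  exact mul_nonneg (by linarith) (sub_nonneg.mpr hle)

lemma flatBodyArea_eq_hexagonalBodyArea_iff (ha : 0 < a) (hξ : 2 * a / √3 ≤ ξ)
    (hξa : ξ < 2 * a) : flatBodyArea a ξ = hexagonalBodyArea ξ ↔ ξ = 2 * a / √3 := by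
  have haξ : a ≤ ξ := (lt_two_mul_div_sqrt_three ha).le.trans hξ
  have hlt := sqrt_sq_sub_sq_lt_sqrt_three_mul ha (ha.le.trans haξ) hξa
  rw [← sub_eq_zero, flatBodyArea_sub_hexagonalBodyArea (by gcongr), mul_eq_zero,
    or_iff_right (by linarith), sub_eq_zero, le_antisymm_iff,
    sqrt_three_mul_sqrt_sq_sub_sq_le_iff ha.le haξ,
    le_sqrt_three_mul_sqrt_sq_sub_sq_iff ha.le haξ,
    ← le_antisymm_iff]

lemma hexagonalBodyArea_le_and_eq_iff {F : ℝ → ℝ} (ha : 0 < a) (haξ : a ≤ ξ)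
    (hξa : ξ < 2 * a) (h₁ : ξ < 2 * a / √3 → F ξ = curvedBodyArea a ξ)
    (h₂ : 2 * a / √3 ≤ ξ → F ξ = flatBodyArea a ξ) :
    hexagonalBodyArea ξ ≤ F ξ ∧ (F ξ = hexagonalBodyArea ξ ↔ ξ = a ∨ ξ = 2 * a / √3) := by
  rcases lt_or_ge ξ (2 * a / √3) with hξ | hξ
  · rw [h₁ hξ, curvedBodyArea_eq_hexagonalBodyArea_iff ha haξ hξ, or_iff_left hξ.ne]
    exact ⟨hexagonalBodyArea_le_curvedBodyArea ha haξ hξ, Iff.rfl⟩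
  · rw [h₂ hξ, flatBodyArea_eq_hexagonalBodyArea_iff ha hξ hξa,
      or_iff_right ((lt_two_mul_div_sqrt_three ha).trans_le hξ).ne']
    exact ⟨hexagonalBodyArea_le_flatBodyArea ha hξ hξa, Iff.rfl⟩

end BodyArea

lemma breathing_coefficient_sub_eq {ξ : ℝ} (G : ℝ) (hξ : ξ ^ 2 ≠ 1) :
    (G - 2 * √3) / (π * (ξ ^ 2 - 1)) - √12 / π =
      (G - hexagonalBodyArea ξ) / (π * (ξ ^ 2 - 1)) := by
  have : ξ ^ 2 - 1 ≠ 0 := sub_ne_zero.mpr hξ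
  rw [sqrt_twelve, hexagonalBodyArea]
  field_simp
  ring

/-- Global lower bound for the breathing coefficient of the 60-hexagonal
initial packing with `α₀ = 0`: for every `ξ > 1`,
`(F(ξ) − 2√3)/(π(ξ² − 1)) ≥ √12/π`, with equality exactly at the hexagonal
configurations `ξ = 2ⁿ` (`n ≥ 1`) or `ξ = 2^(n+1)/√3` (`n : ℕ`). -/
theorem breathing_coefficient_global_lower_bound
    (F : ℝ → ℝ)
    (hF₁ : ∀ ξ : ℝ, ∀ n : ℕ, 2 ^ n ≤ ξ → ξ < 2 ^ (n + 1) / Real.sqrt 3 →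
      F ξ = ξ ^ 2 * (Real.sqrt 3 +
        2 * Real.sin (2 * π / 3 - 2 * Real.arccos (2 ^ n / ξ))))
    (hF₂ : ∀ ξ : ℝ, ∀ n : ℕ, 2 ^ (n + 1) / Real.sqrt 3 ≤ ξ → ξ < 2 ^ (n + 1) →
      F ξ = 8 * 2 ^ n * Real.sqrt (ξ ^ 2 - 4 ^ n)) :
    ∀ ξ : ℝ, 1 < ξ →
      (F ξ - 2 * Real.sqrt 3) / (π * (ξ ^ 2 - 1)) ≥ Real.sqrt 12 / π ∧
      ((F ξ - 2 * Real.sqrt 3) / (π * (ξ ^ 2 - 1)) = Real.sqrt 12 / π ↔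
        (∃ n : ℕ, 1 ≤ n ∧ ξ = 2 ^ n) ∨
        (∃ n : ℕ, ξ = 2 ^ (n + 1) / Real.sqrt 3)) := by
  have dyadic : ∀ n : ℕ, ∀ x : ℝ, 2 ^ n ≤ x → x < 2 ^ (n + 1) →
      hexagonalBodyArea x ≤ F x ∧
      (F x = hexagonalBodyArea x ↔ x = 2 ^ n ∨ x = 2 ^ (n + 1) / √3) := by
    intro n x hn hn'
    have h2 := pow_succ' (2 : ℝ) n
    rw [h2] at hn' ⊢
    refine hexagonalBodyArea_le_and_eq_iff (by positivity) hn hn'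
      (fun h ↦ hF₁ x n hn (h2 ▸ h)) fun h ↦ ?_
    rw [hF₂ x n (h2 ▸ h) (h2 ▸ hn'), flatBodyArea, ← pow_mul, mul_comm n, pow_mul]
    norm_num
  intro ξ hξ
  obtain ⟨n, hn, hn'⟩ := exists_nat_pow_near hξ.le one_lt_two
  have hc : 0 < π * (ξ ^ 2 - 1) := mul_pos pi_pos (by nlinarith)
  rw [ge_iff_le, ← sub_nonneg, ← sub_eq_zero (b := √12 / π),
    breathing_coefficient_sub_eq _ (by nlinarith), div_eq_zero_iff, or_iff_left hc.ne',
    sub_eq_zero]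
  refine ⟨div_nonneg (sub_nonneg.mpr (dyadic n ξ hn hn').1) hc.le, fun h ↦ ?_, ?_⟩
  · rcases (dyadic n ξ hn hn').2.mp h with rfl | rfl
    · exact Or.inl ⟨n, Nat.one_le_iff_ne_zero.mpr (by rintro rfl; simp at hξ), rfl⟩
    · exact Or.inr ⟨n, rfl⟩
  · rintro (⟨k, -, rfl⟩ | ⟨k, rfl⟩)
    · exact (dyadic k _ le_rfl (pow_lt_pow_right₀ one_lt_two k.lt_succ_self)).2.mpr (Or.inl rfl)
    · have hk : (0 : ℝ) < 2 ^ k := by positivity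
      refine (dyadic k _ ?_ ?_).2.mpr (Or.inr rfl) <;> rw [pow_succ']
      exacts [(lt_two_mul_div_sqrt_three hk).le, two_mul_div_sqrt_three_lt hk]
end
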